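/- Every GGS-group over the p-adic tree (p prime, with nonzero defining vector e ∈ (ℤ/pℤ)^{p-1}) is strongly fractal (and in particular fractal). -/

import Mathlib

open Equiv

namespace TreeFract

variable {X : Type*}

/-- The automorphism group of the rooted `d`-adic tree with vertex set the free
monoid `List X`: permutations of the vertex set fixing the root and sending
children of a vertex to children of its image (this is exactly incidence
preservation for the rooted tree). -/
def AutT (X : Type*) : Subgroup (Equiv.Perm (List X)) where
  carrier := {g | g [] = [] ∧ ∀ (u : List X) (x : X), ∃ y : X, g (u ++ [x]) = g u ++ [y]}
  one_mem' := ⟨rfl, fun _ x => ⟨x, rfl⟩⟩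
  mul_mem' := by
    rintro f g ⟨hf1, hf2⟩ ⟨hg1, hg2⟩
    refine ⟨?_, fun u x => ?_⟩
    · show f (g []) = []
      rw [hg1, hf1]
    · obtain ⟨y, hy⟩ := hg2 u x
      obtain ⟨z, hz⟩ := hf2 (g u) y
      exact ⟨z, by show f (g (u ++ [x])) = f (g u) ++ [z]; rw [hy, hz]⟩
  inv_mem' := by
    rintro g ⟨hg1, hg2⟩
    have hinj := g.injective
    refine ⟨?_, fun u x => ?_⟩
    · apply hinj
      show g (g⁻¹ []) = g []
      rw [(show ∀ (σ : Equiv.Perm (List X)) y, σ (σ⁻¹ y) = y from fun σ y => σ.apply_symm_apply y), hg1]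
    · have hne : g⁻¹ (u ++ [x]) ≠ [] := by
        intro h
        have h2 : u ++ [x] = g [] := by
          conv_lhs => rw [← (show ∀ (σ : Equiv.Perm (List X)) y, σ (σ⁻¹ y) = y from fun σ y => σ.apply_symm_apply y) g (u ++ [x]), h]
        rw [hg1] at h2
        simp at h2
      obtain ⟨y, hy⟩ : ∃ y, g⁻¹ (u ++ [x]) = (g⁻¹ (u ++ [x])).dropLast ++ [y] :=
        ⟨(g⁻¹ (u ++ [x])).getLast hne, (List.dropLast_append_getLast hne).symm⟩
      obtain ⟨z, hz⟩ := hg2 ((g⁻¹ (u ++ [x])).dropLast) y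
      have happ : g ((g⁻¹ (u ++ [x])).dropLast) ++ [z] = u ++ [x] := by
        rw [← hz, ← hy, (show ∀ (σ : Equiv.Perm (List X)) y, σ (σ⁻¹ y) = y from fun σ y => σ.apply_symm_apply y)]
      have h2 : g ((g⁻¹ (u ++ [x])).dropLast) = u ∧ ([z] : List X) = [x] :=
        List.append_inj' happ rfl
      refine ⟨y, ?_⟩
      rw [hy]
      congr 1
      apply hinj
      rw [(show ∀ (σ : Equiv.Perm (List X)) y, σ (σ⁻¹ y) = y from fun σ y => σ.apply_symm_apply y), h2.1]

/-- The underlying function of the section of `g` at the vertex `u`. -/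
def sectFun (g : Equiv.Perm (List X)) (u : List X) : List X → List X :=
  fun v => (g (u ++ v)).drop (g u).length

open scoped Classical in
/-- The section `g_u` of a tree automorphism `g` at a vertex `u`, i.e. the unique
automorphism with `g (u ++ v) = g u ++ g_u v` for all `v`.  (By convention it is
the identity for permutations which are not tree automorphisms.) -/
noncomputable def sect (g : Equiv.Perm (List X)) (u : List X) : Equiv.Perm (List X) :=
  if h : Function.Bijective (sectFun g u) then Equiv.ofBijective _ h else 1

/-- The underlying function of the label of `g` at the vertex `u`. -/
def labelFun (g : Equiv.Perm (List X)) (u : List X) : X → X :=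
  fun x => (g (u ++ [x])).getLastD x

open scoped Classical in
/-- The label `g_(u)` of a tree automorphism `g` at a vertex `u`: the permutation
of `X` with `g (u ++ [x]) = g u ++ [g_(u) x]`.  (By convention it is the identity
for permutations which are not tree automorphisms.) -/
noncomputable def label (g : Equiv.Perm (List X)) (u : List X) : Equiv.Perm X :=
  if h : Function.Bijective (labelFun g u) then Equiv.ofBijective _ h else 1

/-- The stabilizer `st_G(u)` of the vertex `u` in `G`. -/
def stV (G : Subgroup (Equiv.Perm (List X))) (u : List X) : Subgroup (Equiv.Perm (List X)) where
  carrier := {g | g ∈ G ∧ g u = u}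
  one_mem' := ⟨one_mem G, rfl⟩
  mul_mem' := by
    rintro f g ⟨hf, hf2⟩ ⟨hg, hg2⟩
    exact ⟨mul_mem hf hg, by show f (g u) = u; rw [hg2, hf2]⟩
  inv_mem' := by
    rintro g ⟨hg, hg2⟩
    refine ⟨inv_mem hg, ?_⟩
    apply g.injective
    show g (g⁻¹ u) = g u
    rw [(show ∀ (σ : Equiv.Perm (List X)) y, σ (σ⁻¹ y) = y from fun σ y => σ.apply_symm_apply y), hg2]

/-- The stabilizer `st_G(L_n)` of the `n`-th level in `G`. -/
def stL (G : Subgroup (Equiv.Perm (List X))) (n : ℕ) : Subgroup (Equiv.Perm (List X)) where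
  carrier := {g | g ∈ G ∧ ∀ u : List X, u.length = n → g u = u}
  one_mem' := ⟨one_mem G, fun _ _ => rfl⟩
  mul_mem' := by
    rintro f g ⟨hf, hf2⟩ ⟨hg, hg2⟩
    exact ⟨mul_mem hf hg, fun u hu => by show f (g u) = u; rw [hg2 u hu, hf2 u hu]⟩
  inv_mem' := by
    rintro g ⟨hg, hg2⟩
    refine ⟨inv_mem hg, fun u hu => ?_⟩
    apply g.injective
    show g (g⁻¹ u) = g u
    rw [(show ∀ (σ : Equiv.Perm (List X)) y, σ (σ⁻¹ y) = y from fun σ y => σ.apply_symm_apply y), hg2 u hu]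

/-- `G` is self-similar: sections of elements of `G` lie in `G`. -/
def SelfSimilar (G : Subgroup (Equiv.Perm (List X))) : Prop :=
  ∀ g ∈ G, ∀ u : List X, sect g u ∈ G

/-- `G` acts transitively on the first level of the tree. -/
def FirstLevelTransitive (G : Subgroup (Equiv.Perm (List X))) : Prop :=
  ∀ x y : X, ∃ g ∈ G, g [x] = [y]

/-- `G` is level transitive: it acts transitively on every level of the tree. -/
def LevelTransitive (G : Subgroup (Equiv.Perm (List X))) : Prop :=
  ∀ (n : ℕ) (u v : List X), u.length = n → v.length = n → ∃ g ∈ G, g u = v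

/-- `G` is fractal: `ψ_u(st_G(u)) = G` for every vertex `u`. -/
def Fractal (G : Subgroup (Equiv.Perm (List X))) : Prop :=
  ∀ u : List X,
    (fun g => sect g u) '' (stV G u : Set (Equiv.Perm (List X))) = (G : Set (Equiv.Perm (List X)))

/-- `G` is strongly fractal: `ψ_x(st_G(L_1)) = G` for every first-level vertex `x`. -/
def StronglyFractal (G : Subgroup (Equiv.Perm (List X))) : Prop :=
  ∀ x : X,
    (fun g => sect g [x]) '' (stL G 1 : Set (Equiv.Perm (List X))) = (G : Set (Equiv.Perm (List X)))

/-- `G` is super strongly fractal: `ψ_u(st_G(L_n)) = G` for every `n` and every `u ∈ L_n`. -/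
def SuperStronglyFractal (G : Subgroup (Equiv.Perm (List X))) : Prop :=
  ∀ (n : ℕ) (u : List X), u.length = n →
    (fun g => sect g u) '' (stL G n : Set (Equiv.Perm (List X))) = (G : Set (Equiv.Perm (List X)))

/-- The normal closure `⟨S⟩^G` of a subset `S ⊆ G` in the subgroup `G`, realized as a
subgroup of the ambient group: the subgroup generated by all `G`-conjugates of `S`. -/
def normalClosureIn (G : Subgroup (Equiv.Perm (List X))) (S : Set (Equiv.Perm (List X))) :
    Subgroup (Equiv.Perm (List X)) :=
  Subgroup.closure {t | ∃ g ∈ G, ∃ s ∈ S, t = g * s * g⁻¹}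

end TreeFract
namespace TreeFract

/-! ### The Hanoi towers generators -/

section Hanoi

variable {d : ℕ}

/-- The underlying function of the automorphism `a_{ij}` of the Hanoi Towers group:
it swaps the first occurrence of `i` or `j` in a word. -/
def hanoiFun (i j : Fin d) : List (Fin d) → List (Fin d)
  | [] => []
  | x :: w => if x = i then j :: w else if x = j then i :: w else x :: hanoiFun i j w

lemma hanoiFun_invol (i j : Fin d) : ∀ w, hanoiFun i j (hanoiFun i j w) = w
  | [] => rfl
  | x :: w => by
    by_cases h1 : x = i
    · subst h1
      by_cases h2 : j = x
      · simp [hanoiFun, h2]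
      · simp [hanoiFun, h2]
    · by_cases h2 : x = j
      · subst h2
        simp [hanoiFun, h1]
      · simp [hanoiFun, h1, h2, hanoiFun_invol i j w]

/-- The automorphism `a_{ij}` of the `d`-adic tree: its label at the root is the
transposition `(x_i x_j)`, its sections at the first-level vertices `x_i` and `x_j`
are trivial and all its other first-level sections equal `a_{ij}` again. -/
def hanoiA (i j : Fin d) : Equiv.Perm (List (Fin d)) :=
  ⟨hanoiFun i j, hanoiFun i j, hanoiFun_invol i j, hanoiFun_invol i j⟩

end Hanoi

/-- The generator `b_i = a_{i,i+1}` (here `i` runs through `0, …, d-2`,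
corresponding to the paper's `b_1, …, b_{d-1}`). -/
def hanoiB (d : ℕ) (i : ℕ) (h : i + 1 < d) : Equiv.Perm (List (Fin d)) :=
  hanoiA ⟨i, Nat.lt_of_succ_lt h⟩ ⟨i + 1, h⟩

/-- The subgroup `G = ⟨b_1, …, b_{d-1}⟩` of the Hanoi Towers group. -/
def hanoiGroup (d : ℕ) : Subgroup (Equiv.Perm (List (Fin d))) :=
  Subgroup.closure {g | ∃ (i : ℕ) (h : i + 1 < d), g = hanoiB d i h}

/-! ### GGS groups (and the rooted automorphism `a`) -/

section GGS

variable {p : ℕ}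

/-- The function adding `m` to the first letter of a word over `ZMod p`. -/
def rotFun (m : ZMod p) : List (ZMod p) → List (ZMod p)
  | [] => []
  | x :: w => (x + m) :: w

/-- The rooted automorphism of the `p`-adic tree whose label at the root is the
`p`-cycle `x ↦ x + m`; for `m = 1` this is the generator `a` of a GGS-group
(identifying `x_i` with `i mod p`). -/
def rotPerm (m : ZMod p) : Equiv.Perm (List (ZMod p)) :=
  ⟨rotFun m, rotFun (-m),
    by intro w; cases w <;> simp [rotFun],
    by intro w; cases w <;> simp [rotFun]⟩

/-- The underlying function of the GGS generator `b` with defining vector `e`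
(the value `e 0` is irrelevant; `e i` for `i ≠ 0` are the coordinates
`e_1, …, e_{p-1}`): `b` fixes the first level, its section at `x_i` is
`a^{e_i}` for `i = 1, …, p-1` and its section at `x_p` (identified with `0`)
is `b` again. -/
def ggsFun (e : ZMod p → ZMod p) : List (ZMod p) → List (ZMod p)
  | [] => []
  | x :: w => if x = 0 then x :: ggsFun e w else x :: rotFun (e x) w

lemma ggsFun_inv (e : ZMod p → ZMod p) : ∀ w, ggsFun (fun i => -(e i)) (ggsFun e w) = w
  | [] => rfl
  | x :: w => by
    by_cases h : x = 0
    · simp only [ggsFun, if_pos h]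
      rw [ggsFun_inv e w]
    · simp only [ggsFun, if_neg h]
      cases w <;> simp [rotFun]

/-- The GGS generator `b` with defining vector `e`, as a tree automorphism. -/
def ggsB (e : ZMod p → ZMod p) : Equiv.Perm (List (ZMod p)) :=
  ⟨ggsFun e, ggsFun (fun i => -(e i)), ggsFun_inv e, by
    intro w
    have h := ggsFun_inv (fun i => -(e i)) w
    simpa using h⟩

end GGS

/-- The GGS-group `G = ⟨a, b⟩` over the `p`-adic tree with defining vector `e`. -/
def ggsGroup (p : ℕ) (e : ZMod p → ZMod p) : Subgroup (Equiv.Perm (List (ZMod p))) :=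
  Subgroup.closure {rotPerm 1, ggsB e}

/-! ### The first Grigorchuk group -/

/-- The three directed generators `b, c, d` (for `k % 3 = 0, 1, 2` respectively) of the
first Grigorchuk group, defined by the mutual recursion
`b = (a, c)`, `c = (a, d)`, `d = (1, b)` (identifying `x_1` with `0` and `x_2` with `1`). -/
def griFun : ℕ → List (ZMod 2) → List (ZMod 2)
  | _, [] => []
  | k, x :: w => if x = 0 then (if k % 3 = 2 then x :: w else x :: rotFun 1 w)
                 else x :: griFun (k + 1) w

lemma griFun_invol : ∀ (w : List (ZMod 2)) (k : ℕ), griFun k (griFun k w) = w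
  | [], _ => rfl
  | x :: w, k => by
    by_cases h : x = 0
    · by_cases h3 : k % 3 = 2
      · simp [griFun, h, h3]
      · simp only [griFun, if_pos h, if_neg h3]
        cases w with
        | nil => rfl
        | cons y v =>
            have hy : y + 1 + 1 = y := by
              rw [add_assoc]
              simp [show (1 : ZMod 2) + 1 = 0 from rfl]
            simp [rotFun, hy]
    · simp only [griFun, if_neg h]
      rw [griFun_invol w (k + 1)]

/-- The generator `b` of the first Grigorchuk group, with sections `(a, c)`. -/
def griB : Equiv.Perm (List (ZMod 2)) :=
  ⟨griFun 0, griFun 0, fun w => griFun_invol w 0, fun w => griFun_invol w 0⟩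

/-- The generator `c` of the first Grigorchuk group, with sections `(a, d)`. -/
def griC : Equiv.Perm (List (ZMod 2)) :=
  ⟨griFun 1, griFun 1, fun w => griFun_invol w 1, fun w => griFun_invol w 1⟩

/-- The generator `d` of the first Grigorchuk group, with sections `(1, b)`. -/
def griD : Equiv.Perm (List (ZMod 2)) :=
  ⟨griFun 2, griFun 2, fun w => griFun_invol w 2, fun w => griFun_invol w 2⟩

/-- The first Grigorchuk group `𝒢 = ⟨a, b, c, d⟩` acting on the binary tree. -/
def grigorchukGroup : Subgroup (Equiv.Perm (List (ZMod 2))) :=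
  Subgroup.closure {rotPerm 1, griB, griC, griD}

end TreeFract

/-!
Conjugating `b` by `a^k` gives an element of `st_G(L_1)` whose section at `x` is the section
of `b` at `x - k`. These sections are `b` and the `a^{e_i}`, and since some `e_i` is a unit of
`𝔽_p`, a power of `a^{e_i}` is `a`. Hence `ψ_x(st_G(L_1))`, a subgroup of `G` by
self-similarity, contains both generators and equals `G`. Fractality follows by induction on
the vertex, because `ψ_{xw} = ψ_w ∘ ψ_x` and `g ∈ st_G(L_1)` fixes `xw` as soon as `ψ_x g`
fixes `w`.
-/

namespace TreeFract

open Subgroup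

section Sections

variable {X : Type*} {f g : Perm (List X)}

lemma exists_apply_append_eq (hg : g ∈ AutT X) (u v : List X) :
    ∃ w, g (u ++ v) = g u ++ w := by
  induction v using List.reverseRecOn with
  | nil => exact ⟨[], by simp⟩
  | append_singleton v x ih =>
    obtain ⟨w, hw⟩ := ih
    obtain ⟨y, hy⟩ := hg.2 (u ++ v) x
    exact ⟨w ++ [y], by rw [← List.append_assoc, hy, hw, List.append_assoc]⟩

lemma exists_apply_singleton_eq (hg : g ∈ AutT X) (x : X) : ∃ y, g [x] = [y] := by
  simpa [hg.1] using hg.2 [] x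

lemma apply_append_eq_sectFun (hg : g ∈ AutT X) (u v : List X) :
    g (u ++ v) = g u ++ sectFun g u v := by
  obtain ⟨w, hw⟩ := exists_apply_append_eq hg u v
  rw [sectFun, hw, List.drop_left]

lemma sectFun_bijective (hg : g ∈ AutT X) (u : List X) : Function.Bijective (sectFun g u) := by
  refine ⟨fun v v' h => ?_, fun w => ⟨sectFun g⁻¹ (g u) w, ?_⟩⟩
  · apply List.append_cancel_left (as := u)
    apply g.injective
    rw [apply_append_eq_sectFun hg, apply_append_eq_sectFun hg, h]
  · have h := apply_append_eq_sectFun (inv_mem hg) (g u) w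
    rw [show g⁻¹ (g u) = u from g.symm_apply_apply u, Perm.inv_eq_iff_eq] at h
    rw [sectFun, ← h, List.drop_left]

lemma apply_append_eq_sect (hg : g ∈ AutT X) (u v : List X) :
    g (u ++ v) = g u ++ sect g u v := by
  rw [sect, dif_pos (sectFun_bijective hg u)]
  exact apply_append_eq_sectFun hg u v

lemma sect_eq_of_apply_append (hg : g ∈ AutT X) {u : List X} {k : Perm (List X)}
    (hk : ∀ v, g (u ++ v) = g u ++ k v) : sect g u = k :=
  Equiv.ext fun v => List.append_cancel_left <| (apply_append_eq_sect hg u v).symm.trans (hk v)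

lemma sect_mem_autT (hg : g ∈ AutT X) (u : List X) : sect g u ∈ AutT X := by
  refine ⟨?_, fun v x => ?_⟩
  · simpa using (apply_append_eq_sect hg u []).symm
  · obtain ⟨y, hy⟩ := hg.2 (u ++ v) x
    refine ⟨y, List.append_cancel_left (as := g u) ?_⟩
    rw [← apply_append_eq_sect hg, ← List.append_assoc, hy, apply_append_eq_sect hg,
      List.append_assoc]

lemma sect_nil (hg : g ∈ AutT X) : sect g [] = g :=
  sect_eq_of_apply_append hg fun v => by simp [hg.1]

lemma sect_one (u : List X) : sect (1 : Perm (List X)) u = 1 :=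
  sect_eq_of_apply_append (one_mem _) fun _ => rfl

lemma sect_mul (hf : f ∈ AutT X) (hg : g ∈ AutT X) (u : List X) :
    sect (f * g) u = sect f (g u) * sect g u :=
  sect_eq_of_apply_append (mul_mem hf hg) fun v => by
    simp only [Perm.mul_apply, apply_append_eq_sect hg, apply_append_eq_sect hf]

lemma sect_inv (hg : g ∈ AutT X) (u : List X) : sect g⁻¹ u = (sect g (g⁻¹ u))⁻¹ := by
  have h := sect_mul hg (inv_mem hg) u
  rw [mul_inv_cancel, sect_one] at h
  exact (inv_eq_of_mul_eq_one_right h.symm).symm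

lemma sect_append (hg : g ∈ AutT X) (u v : List X) : sect g (u ++ v) = sect (sect g u) v :=
  sect_eq_of_apply_append hg fun w => by
    rw [List.append_assoc, apply_append_eq_sect hg, apply_append_eq_sect (sect_mem_autT hg u),
      apply_append_eq_sect hg, List.append_assoc]

end Sections

section Fractality

variable {X : Type*} {S : Set (Perm (List X))}

lemma selfSimilar_closure (hS : S ⊆ AutT X) (hsect : ∀ s ∈ S, ∀ x, sect s [x] ∈ closure S) :
    SelfSimilar (closure S) := by
  have hG : closure S ≤ AutT X := closure_le _ |>.mpr hS
  have hfirst : ∀ g ∈ closure S, ∀ x, sect g [x] ∈ closure S := by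
    intro g hg
    induction hg using closure_induction with
    | mem s hs => exact hsect s hs
    | one => simp [sect_one]
    | mul f g hf hg ihf ihg =>
      intro x
      obtain ⟨y, hy⟩ := exists_apply_singleton_eq (hG hg) x
      rw [sect_mul (hG hf) (hG hg), hy]
      exact mul_mem (ihf y) (ihg x)
    | inv g hg ih =>
      intro x
      obtain ⟨y, hy⟩ := exists_apply_singleton_eq (inv_mem (hG hg)) x
      rw [sect_inv (hG hg), hy]
      exact inv_mem (ih y)
  intro g hg u
  induction u generalizing g with
  | nil => rwa [sect_nil (hG hg)]
  | cons x w ih =>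
    rw [← List.singleton_append, sect_append (hG hg)]
    exact ih _ (hfirst g hg x)

variable {G : Subgroup (Perm (List X))}

noncomputable def firstLevelSectHom (hG : G ≤ AutT X) (x : X) : stL G 1 →* Perm (List X) :=
  MonoidHom.mk' (fun g => sect g.1 [x]) fun f g => by
    simp only [Subgroup.coe_mul, sect_mul (hG f.2.1) (hG g.2.1), g.2.2 [x] rfl]

lemma firstLevelSectHom_apply (hG : G ≤ AutT X) (x : X) (g : stL G 1) :
    firstLevelSectHom hG x g = sect g.1 [x] :=
  rfl

lemma stronglyFractal_closure (hG : closure S ≤ AutT X) (hss : SelfSimilar (closure S))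
    (hgen : ∀ x, S ⊆ (firstLevelSectHom hG x).range) : StronglyFractal (closure S) := by
  intro x
  have hrange : (firstLevelSectHom hG x).range = closure S := by
    refine le_antisymm ?_ (closure_le _ |>.mpr (hgen x))
    rintro _ ⟨g, rfl⟩
    exact hss g g.2.1 [x]
  ext h
  conv_rhs => rw [← hrange]
  exact ⟨fun ⟨g, hg, hgh⟩ => ⟨⟨g, hg⟩, hgh⟩, fun ⟨g, hgh⟩ => ⟨g.1, g.2, hgh⟩⟩

lemma fractal_of_stronglyFractal (hG : G ≤ AutT X) (hss : SelfSimilar G)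
    (hsf : StronglyFractal G) : Fractal G := by
  intro u
  induction u with
  | nil =>
    ext h
    refine ⟨?_, fun hh => ⟨h, ⟨hh, (hG hh).1⟩, sect_nil (hG hh)⟩⟩
    rintro ⟨g, hg, rfl⟩
    show sect g [] ∈ G
    rw [sect_nil (hG hg.1)]
    exact hg.1
  | cons x w ih =>
    refine Set.Subset.antisymm (Set.image_subset_iff.mpr fun g hg => hss g hg.1 _) ?_
    intro h hh
    rw [← ih] at hh
    obtain ⟨f, hf, rfl⟩ := hh
    obtain ⟨g, hg, rfl⟩ : f ∈ (fun g => sect g [x]) '' (stL G 1 : Set (Perm (List X))) := by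
      rw [hsf x]
      exact hf.1
    have hx : g [x] = [x] := hg.2 [x] rfl
    refine ⟨g, ⟨hg.1, ?_⟩, sect_append (hG hg.1) [x] w⟩
    rw [← List.singleton_append, apply_append_eq_sect (hG hg.1), hx, hf.2]

end Fractality

section GGS

variable {p : ℕ}

lemma rotPerm_singleton (m x : ZMod p) : rotPerm m [x] = [x + m] := rfl

lemma rotPerm_mem_autT (m : ZMod p) : rotPerm m ∈ AutT (ZMod p) := by
  refine ⟨rfl, fun u x => ?_⟩
  cases u with
  | nil => exact ⟨x + m, rfl⟩
  | cons z u => exact ⟨x, rfl⟩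

lemma rotPerm_mul (m m' : ZMod p) : rotPerm m * rotPerm m' = rotPerm (m + m') :=
  Equiv.ext fun
    | [] => rfl
    | x :: w => by simp [rotPerm, rotFun, add_assoc, add_comm m']

lemma rotPerm_zero : rotPerm (0 : ZMod p) = 1 :=
  Equiv.ext fun
    | [] => rfl
    | x :: w => by simp [rotPerm, rotFun]

lemma rotPerm_pow (m : ZMod p) (n : ℕ) : rotPerm m ^ n = rotPerm ((n : ZMod p) * m) := by
  induction n with
  | zero => simp [rotPerm_zero]
  | succ n ih => rw [pow_succ, ih, rotPerm_mul, Nat.cast_succ, add_one_mul]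

lemma rotPerm_mul_mem [NeZero p] {H : Subgroup (Perm (List (ZMod p)))} {m : ZMod p}
    (hm : rotPerm m ∈ H) (n : ZMod p) : rotPerm (n * m) ∈ H := by
  simpa [rotPerm_pow, ZMod.natCast_zmod_val] using pow_mem hm n.val

lemma sect_rotPerm_singleton (m x : ZMod p) : sect (rotPerm m) [x] = 1 :=
  sect_eq_of_apply_append (rotPerm_mem_autT m) fun _ => rfl

lemma ggsB_singleton (e : ZMod p → ZMod p) (x : ZMod p) : ggsB e [x] = [x] := by
  by_cases h : x = 0 <;> simp [ggsB, ggsFun, rotFun, h]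

lemma ggsB_mem_autT (e : ZMod p → ZMod p) : ggsB e ∈ AutT (ZMod p) := by
  refine ⟨rfl, fun u x => ?_⟩
  induction u with
  | nil => exact ⟨x, ggsB_singleton e x⟩
  | cons z u ih =>
    by_cases hz : z = 0
    · obtain ⟨y, hy⟩ := ih
      exact ⟨y, by simpa [ggsB, ggsFun, hz] using hy⟩
    · obtain ⟨y, hy⟩ : ∃ y, rotFun (e z) (u ++ [x]) = rotFun (e z) u ++ [y] :=
        (rotPerm_mem_autT (e z)).2 u x
      exact ⟨y, by simpa [ggsB, ggsFun, hz] using hy⟩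

lemma sect_ggsB_singleton (e : ZMod p → ZMod p) (x : ZMod p) :
    sect (ggsB e) [x] = if x = 0 then ggsB e else rotPerm (e x) := by
  refine sect_eq_of_apply_append (ggsB_mem_autT e) fun v => ?_
  rw [ggsB_singleton]
  split_ifs with h <;> simp [ggsB, ggsFun, rotPerm, h]

lemma sect_rotPerm_conj {g : Perm (List (ZMod p))} (hg : g ∈ AutT (ZMod p)) (k x : ZMod p) :
    sect (rotPerm k * g * rotPerm (-k)) [x] = sect g [x - k] := by
  obtain ⟨y, hy⟩ := exists_apply_singleton_eq hg (x - k)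
  rw [sect_mul (mul_mem (rotPerm_mem_autT k) hg) (rotPerm_mem_autT _), rotPerm_singleton,
    ← sub_eq_add_neg, sect_mul (rotPerm_mem_autT k) hg, hy, sect_rotPerm_singleton,
    sect_rotPerm_singleton, one_mul, mul_one]

lemma ggsGroup_le_autT (e : ZMod p → ZMod p) : ggsGroup p e ≤ AutT (ZMod p) :=
  closure_le _ |>.mpr <| Set.insert_subset_iff.mpr
    ⟨rotPerm_mem_autT 1, Set.singleton_subset_iff.mpr (ggsB_mem_autT e)⟩

lemma rotPerm_mem_ggsGroup [NeZero p] (e : ZMod p → ZMod p) (m : ZMod p) :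
    rotPerm m ∈ ggsGroup p e := by
  simpa using rotPerm_mul_mem (H := ggsGroup p e) (m := 1) (subset_closure (Set.mem_insert _ _)) m

lemma ggsB_mem_ggsGroup (e : ZMod p → ZMod p) : ggsB e ∈ ggsGroup p e :=
  subset_closure (Set.mem_insert_of_mem _ rfl)

lemma ggsGroup_selfSimilar [NeZero p] (e : ZMod p → ZMod p) : SelfSimilar (ggsGroup p e) := by
  refine selfSimilar_closure (fun s hs => ggsGroup_le_autT e (subset_closure hs)) ?_
  rintro s (rfl | rfl) x
  · rw [sect_rotPerm_singleton]
    exact one_mem _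
  · rw [sect_ggsB_singleton]
    split_ifs
    exacts [ggsB_mem_ggsGroup e, rotPerm_mem_ggsGroup e _]

lemma rotPerm_conj_ggsB_mem_stL [NeZero p] (e : ZMod p → ZMod p) (k : ZMod p) :
    rotPerm k * ggsB e * rotPerm (-k) ∈ stL (ggsGroup p e) 1 := by
  refine ⟨mul_mem (mul_mem (rotPerm_mem_ggsGroup e k) (ggsB_mem_ggsGroup e))
    (rotPerm_mem_ggsGroup e _), fun u hu => ?_⟩
  obtain ⟨x, rfl⟩ := List.length_eq_one_iff.mp hu
  simp only [Perm.mul_apply, rotPerm_singleton, ggsB_singleton, neg_add_cancel_right]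

end GGS

/-- Every GGS-group over the `p`-adic tree (with nonzero defining
vector `e`) is strongly fractal, and in particular fractal. -/
theorem ggsGroup_stronglyFractal (p : ℕ) [Fact p.Prime] (e : ZMod p → ZMod p)
    (he : ∃ i : ZMod p, i ≠ 0 ∧ e i ≠ 0) :
    StronglyFractal (ggsGroup p e) ∧ Fractal (ggsGroup p e) := by
  have hG := ggsGroup_le_autT e
  have hss := ggsGroup_selfSimilar e
  have hconj (x i : ZMod p) : sect (ggsB e) [i] ∈ (firstLevelSectHom hG x).range :=
    ⟨⟨_, rotPerm_conj_ggsB_mem_stL e (x - i)⟩, by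
      rw [firstLevelSectHom_apply, sect_rotPerm_conj (ggsB_mem_autT e), sub_sub_cancel]⟩
  have hsf : StronglyFractal (ggsGroup p e) := by
    refine stronglyFractal_closure hG hss fun x => Set.pair_subset_iff.mpr ⟨?_, ?_⟩
    · obtain ⟨i, hi, hei⟩ := he
      have ha := hconj x i
      rw [sect_ggsB_singleton, if_neg hi] at ha
      have h1 := rotPerm_mul_mem ha (e i)⁻¹
      rwa [inv_mul_cancel₀ hei] at h1
    · have hb := hconj x 0
      rwa [sect_ggsB_singleton, if_pos rfl] at hb
  exact ⟨hsf, fractal_of_stronglyFractal hG hss hsf⟩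

end TreeFract
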